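/- If a $d$-dimensional continuous $\mathbb{F}$-adapted process $X=(X_t)_{t\in[0,T]}$ has conditional full support with respect to $\mathbb{F}$, then $X$ satisfies the joint $\mathbb{F}$-conditional up and down (CUD) condition: for any $h\in(0,T)$, any stopping times $\tau_1\le\tau_2$ with $\tau_2\ge\tau_1+h$ a.s., any $B\in\mathcal{F}_{\tau_1}$ with $P(B)>0$, and any signs $\alpha_1,\dots,\alpha_d\in\{+,-\}$, we have $P\big(\big[\bigcap_{i\in I^B}A_i^{\alpha_i}\big]\cap B\big)>0$ whenever $I^B\ne\emptyset$, where $A_i^+=\{X^i_{\tau_1}<X^i_{\tau_2}\}$, $A_i^-=\{X^i_{\tau_1}>X^i_{\tau_2}\}$, and $I^B$ is the set of indices $k$ with $P(\{X^k_{\tau_1}\ne X^k_{\tau_2}\}\cap B)>0$. -/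

import Mathlib

open MeasureTheory ProbabilityTheory Set
noncomputable section
variable {Ω : Type*}

/-- The small-ball event: the path of `X` on `[t₀,T]` stays `ε`-close to `X t₀ + f`. -/
def sbEvent {E : Type*} [NormedAddCommGroup E] (X : ℝ → Ω → E) (t₀ T ε : ℝ) (f : ℝ → E) : Set Ω :=
  {ω | ∀ t ∈ Set.Icc t₀ T, ‖X t ω - X t₀ ω - f t‖ < ε}

/-- Conditional full support (conditional small ball property) of the process `X` on `[0,T]`
with respect to the filtration `F`. -/
def HasCFS {E : Type*} [NormedAddCommGroup E] [m0 : MeasurableSpace Ω] (μ : Measure Ω) (T : ℝ)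
    (F : ℝ → MeasurableSpace Ω) (X : ℝ → Ω → E) : Prop :=
  ∀ t₀ ∈ Set.Ico (0:ℝ) T, ∀ f : ℝ → E, ContinuousOn f (Set.Icc t₀ T) → f t₀ = 0 →
    ∀ ε > 0, ∀ᵐ ω ∂μ,
      0 < (μ[(sbEvent X t₀ T ε f).indicator (fun _ => (1:ℝ)) | F t₀]) ω

/-- The natural filtration of a process. -/
def natFilt {E : Type*} [MeasurableSpace E] [MeasurableSpace Ω] (X : ℝ → Ω → E) (t : ℝ) :
    MeasurableSpace Ω := ⨆ s ∈ Set.Iic t, MeasurableSpace.comap (X s) inferInstance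

/-- The usual augmentation of a filtration: smallest right-continuous complete enlargement. -/
def usualAug [MeasurableSpace Ω] (μ : Measure Ω) (F : ℝ → MeasurableSpace Ω) (t : ℝ) :
    MeasurableSpace Ω :=
  ⨅ s ∈ Set.Ioi t, (F s ⊔ MeasurableSpace.generateFrom {N : Set Ω | μ N = 0})

/-- The σ-algebra generated by a whole process. -/
def processSigma {E : Type*} [MeasurableSpace E] [MeasurableSpace Ω] (X : ℝ → Ω → E) :
    MeasurableSpace Ω := ⨆ t : ℝ, MeasurableSpace.comap (X t) inferInstance

/-- The joint conditional up-and-down (CUD) condition with respect to the Cheridito class. -/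
def JointCUD {d : ℕ} {mΩ : MeasurableSpace Ω} (μ : Measure Ω) (T : ℝ)
    (F : MeasureTheory.Filtration ℝ mΩ) (X : ℝ → Ω → EuclideanSpace ℝ (Fin d)) : Prop :=
  ∀ h ∈ Set.Ioo (0:ℝ) T, ∀ τ₁ τ₂ : Ω → ℝ,
    ∀ hτ₁ : IsStoppingTime F (fun ω => (τ₁ ω : WithTop ℝ)), IsStoppingTime F (fun ω => (τ₂ ω : WithTop ℝ)) →
    (∀ ω, τ₁ ω ∈ Set.Icc 0 T) → (∀ ω, τ₂ ω ∈ Set.Icc 0 T) →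
    (∀ ω, τ₁ ω ≤ τ₂ ω) → (∀ᵐ ω ∂μ, τ₁ ω + h ≤ τ₂ ω) →
    ∀ B : Set Ω, MeasurableSet[hτ₁.measurableSpace] B → 0 < μ B →
    ∀ α : Fin d → Bool,
      {k : Fin d | 0 < μ ({ω | X (τ₁ ω) ω k ≠ X (τ₂ ω) ω k} ∩ B)}.Nonempty →
      0 < μ ((⋂ k ∈ {k : Fin d | 0 < μ ({ω | X (τ₁ ω) ω k ≠ X (τ₂ ω) ω k} ∩ B)},
        (if α k then {ω | X (τ₁ ω) ω k < X (τ₂ ω) ω k}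
         else {ω | X (τ₂ ω) ω k < X (τ₁ ω) ω k})) ∩ B)


/-! With `δ = h / 2`, a countable pigeonhole gives `t₀ ∈ [0, T)` and `M` such that the part `B'`
of `B` where `τ₁ ∈ [t₀ - δ, t₀]` and `‖X t₀ - X τ₁‖ ≤ M` has positive mass; `B'` is
`F t₀`-measurable. Conditional full support at `t₀`, for the path rising linearly to
`(M + 1) • s` on `[t₀, t₀ + δ]` (`s` the vector of prescribed signs) and constant afterwards,
gives `0 < μ (B' ∩ E)` where on `E` the path of `X` stays within `1` of it. Since `τ₂ ≥ t₀ + δ`,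
on `B' ∩ E` the increment `X τ₂ - X τ₁` is within `M + 1` of `(M + 1) • s`, so each of its
coordinates has the prescribed sign. -/
open Filter TopologicalSpace

theorem measurableSet_setOf_forall_lt_of_continuousOn [MeasurableSpace Ω] {ι : Type*}
    [TopologicalSpace ι] [SecondCountableTopology ι] [MetrizableSpace ι]
    {K : Set ι} (hK : IsCompact K) {G : ι → Ω → ℝ} (hG : ∀ t, Measurable (G t))
    (hGK : ∀ ω, ContinuousOn (G · ω) K) (ε : ℝ) :
    MeasurableSet {ω | ∀ t ∈ K, G t ω < ε} := by
  obtain ⟨D, hDK, hD, hKD⟩ := (IsSeparable.of_separableSpace K).exists_countable_dense_subset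
  have hclosure : closure D ⊆ K := closure_minimal hDK hK.isClosed
  have hle : ∀ ω c, (∀ t ∈ K, G t ω ≤ c) ↔ ∀ t ∈ D, G t ω ≤ c := fun ω c =>
    ⟨fun h t ht => h t (hDK ht), fun h t ht =>
      le_on_closure h ((hGK ω).mono hclosure) continuousOn_const (hKD ht)⟩
  have hlt : ∀ ω, (∀ t ∈ K, G t ω < ε) ↔ ∃ n : ℕ, ∀ t ∈ K, G t ω ≤ ε - 1 / (n + 1) := by
    intro ω
    refine ⟨fun h => ?_, fun ⟨n, hn⟩ t ht =>
      (hn t ht).trans_lt (sub_lt_self ε Nat.one_div_pos_of_nat)⟩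
    rcases K.eq_empty_or_nonempty with rfl | hne
    · exact ⟨0, by simp⟩
    obtain ⟨s, hs, hmax⟩ := hK.exists_isMaxOn hne (hGK ω)
    obtain ⟨n, hn⟩ := exists_nat_one_div_lt (sub_pos.2 (h s hs))
    exact ⟨n, fun t ht => by linarith [show G t ω ≤ G s ω from hmax ht]⟩
  have hset : {ω | ∀ t ∈ K, G t ω < ε} = ⋃ n : ℕ, ⋂ t ∈ D, {ω | G t ω ≤ ε - 1 / (n + 1)} := by
    ext ω
    simp only [mem_ofPred_eq, hlt, hle, mem_iUnion, mem_iInter]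
  rw [hset]
  exact .iUnion fun n => .biInter hD fun t _ => measurableSet_le (hG t) measurable_const

theorem measurableSet_sbEvent {E : Type*} [NormedAddCommGroup E] [MeasurableSpace Ω]
    {X : ℝ → Ω → E} (hX : ∀ t, StronglyMeasurable (X t))
    (hXcont : ∀ ω, Continuous fun t => X t ω) (t₀ T ε : ℝ) {f : ℝ → E}
    (hf : ContinuousOn f (Icc t₀ T)) : MeasurableSet (sbEvent X t₀ T ε f) :=
  measurableSet_setOf_forall_lt_of_continuousOn isCompact_Icc
    (fun t => (((hX t).sub (hX t₀)).sub stronglyMeasurable_const).norm.measurable)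
    (fun ω => (((hXcont ω).continuousOn.sub continuousOn_const).sub hf).norm) ε

theorem measure_inter_pos_of_ae_condExp_indicator_pos {m m₀ : MeasurableSpace Ω}
    {μ : Measure Ω} [IsFiniteMeasure μ] (hm : m ≤ m₀) {B E : Set Ω} (hB : MeasurableSet[m] B)
    (hE : MeasurableSet E) (hμB : 0 < μ B)
    (hpos : ∀ᵐ ω ∂μ, 0 < μ[E.indicator (fun _ => (1 : ℝ)) | m] ω) :
    0 < μ (B ∩ E) := by
  have hint : ∫ ω in B, μ[E.indicator (fun _ => (1 : ℝ)) | m] ω ∂μ = μ.real (B ∩ E) := by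
    rw [setIntegral_condExp hm ((integrable_const 1).indicator hE) hB,
      setIntegral_indicator hE, setIntegral_const, smul_eq_mul, mul_one]
  have hint_pos : 0 < ∫ ω in B, μ[E.indicator (fun _ => (1 : ℝ)) | m] ω ∂μ := by
    rw [setIntegral_pos_iff_support_of_nonneg_ae
      (ae_restrict_of_ae (hpos.mono fun ω hω => hω.le)) integrable_condExp.integrableOn]
    refine hμB.trans_le (measure_mono_ae ?_)
    filter_upwards [hpos] with ω hω hωB using ⟨hω.ne', hωB⟩
  rw [hint] at hint_pos
  exact ENNReal.toReal_pos_iff.1 hint_pos |>.1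

section Window

variable {E : Type*} [NormedAddCommGroup E]

theorem exists_measure_window_pos [MeasurableSpace Ω] {μ : Measure Ω} (X : ℝ → Ω → E)
    {τ : Ω → ℝ} (hτ : ∀ ω, 0 ≤ τ ω) {B : Set Ω} (hμB : 0 < μ B) {δ T : ℝ} (hδ : 0 < δ)
    (hτT : ∀ᵐ ω ∂μ, ω ∈ B → τ ω + δ < T) :
    ∃ t₀ ∈ Ico 0 T, ∃ M : ℝ,
      0 < μ {ω | ω ∈ B ∧ τ ω ∈ Icc (t₀ - δ) t₀ ∧ ‖X t₀ ω - X (τ ω) ω‖ ≤ M} := by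
  let A : ℕ × ℕ → Set Ω := fun p => {ω | ω ∈ B ∧ τ ω ∈ Icc (p.1 * δ - δ) (p.1 * δ) ∧
    ‖X (p.1 * δ) ω - X (τ ω) ω‖ ≤ p.2 ∧ p.1 * δ < T}
  have hcover : B ≤ᵐ[μ] ⋃ p, A p := by
    filter_upwards [hτT] with ω hω hωB
    have hj := Nat.ceil_lt_add_one (div_nonneg (hτ ω) hδ.le)
    have hj' := Nat.le_ceil (τ ω / δ)
    rw [div_le_iff₀ hδ] at hj'
    rw [← sub_lt_iff_lt_add, lt_div_iff₀ hδ] at hj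
    refine mem_iUnion.2 ⟨(⌈τ ω / δ⌉₊, ⌈‖X (⌈τ ω / δ⌉₊ * δ) ω - X (τ ω) ω‖⌉₊), hωB,
      ⟨?_, hj'⟩, Nat.le_ceil _, ?_⟩
    · linarith
    · linarith [hω hωB]
  obtain ⟨⟨j, M⟩, hpos⟩ :=
    exists_measure_pos_of_not_measure_iUnion_null (hμB.trans_le (measure_mono_ae hcover)).ne'
  obtain ⟨ω, -, -, -, hjT⟩ := nonempty_of_measure_ne_zero hpos.ne'
  exact ⟨j * δ, ⟨by positivity, hjT⟩, M,
    hpos.trans_le (measure_mono fun ω hω => ⟨hω.1, hω.2.1, hω.2.2.1⟩)⟩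

theorem measurableSet_window {mΩ : MeasurableSpace Ω} {F : Filtration ℝ mΩ}
    {X : ℝ → Ω → E} (hX : IsStronglyProgressive F X) {τ : Ω → ℝ}
    (hτ : IsStoppingTime F fun ω => (τ ω : WithTop ℝ)) {B : Set Ω}
    (hB : MeasurableSet[hτ.measurableSpace] B) (t₀ δ M : ℝ) :
    MeasurableSet[F t₀] {ω | ω ∈ B ∧ τ ω ∈ Icc (t₀ - δ) t₀ ∧ ‖X t₀ ω - X (τ ω) ω‖ ≤ M} := by
  have hwindow : MeasurableSet[F t₀] (B ∩ {ω | t₀ - δ ≤ τ ω} ∩ {ω | τ ω ≤ t₀}) := by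
    have hge := hτ.measurableSet_ge' (t₀ - δ)
    simp only [WithTop.coe_le_coe] at hge
    simpa using ((hτ.measurableSet _).1 (hB.inter hge)).2 t₀
  have hstopped : StronglyMeasurable[F t₀] fun ω => X (min (τ ω) t₀) ω := by
    have heq : (stoppedValue X fun ω => min (τ ω : WithTop ℝ) t₀) =
        fun ω => X (min (τ ω) t₀) ω := by
      funext ω
      rw [stoppedValue, ← WithTop.coe_min]
      rfl
    exact heq ▸
      stronglyMeasurable_stoppedValue_of_le hX (hτ.min_const t₀) fun ω => min_le_right _ _
  have hbound : MeasurableSet[F t₀] {ω | ‖X t₀ ω - X (min (τ ω) t₀) ω‖ ≤ M} :=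
    measurableSet_le ((hX.stronglyAdapted t₀).sub hstopped).norm.measurable measurable_const
  convert hwindow.inter hbound using 1
  ext ω
  simp only [mem_ofPred_eq, mem_inter_iff, mem_Icc]
  constructor
  · rintro ⟨hωB, ⟨hlo, hhi⟩, hM⟩
    exact ⟨⟨⟨hωB, hlo⟩, hhi⟩, by rwa [min_eq_left hhi]⟩
  · rintro ⟨⟨⟨hωB, hlo⟩, hhi⟩, hM⟩
    exact ⟨hωB, ⟨hlo, hhi⟩, by rwa [min_eq_left hhi] at hM⟩

end Window

section Ramp

variable {E : Type*} [NormedAddCommGroup E] [NormedSpace ℝ E]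

def ramp (t₀ δ : ℝ) (w : E) (t : ℝ) : E :=
  min ((t - t₀) / δ) 1 • w

theorem continuous_ramp (t₀ δ : ℝ) (w : E) : Continuous (ramp t₀ δ w) :=
  (((continuous_id.sub continuous_const).div_const δ).min continuous_const).smul continuous_const

theorem ramp_self (t₀ δ : ℝ) (w : E) : ramp t₀ δ w t₀ = 0 := by
  simp [ramp]

theorem ramp_of_le {t₀ δ t : ℝ} (hδ : 0 < δ) (ht : t₀ + δ ≤ t) (w : E) : ramp t₀ δ w t = w := by
  rw [ramp, min_eq_right ((one_le_div hδ).2 (by linarith)), one_smul]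

end Ramp

def signVec {ι : Type*} (α : ι → Bool) : EuclideanSpace ℝ ι :=
  WithLp.toLp 2 fun k => if α k then 1 else -1

theorem lt_apply_of_norm_sub_smul_signVec_lt {ι : Type*} [Fintype ι] {α : ι → Bool}
    {x y z : EuclideanSpace ℝ ι} {M : ℝ} (hxz : ‖z - x‖ ≤ M)
    (hzy : ‖y - z - (M + 1) • signVec α‖ < 1) (k : ι) :
    if α k then x k < y k else y k < x k := by
  have hxy : ‖y - x - (M + 1) • signVec α‖ < M + 1 :=
    calc ‖y - x - (M + 1) • signVec α‖ = ‖(y - z - (M + 1) • signVec α) + (z - x)‖ := by abel_nf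
      _ ≤ ‖y - z - (M + 1) • signVec α‖ + ‖z - x‖ := norm_add_le _ _
      _ < 1 + M := add_lt_add_of_lt_of_le hzy hxz
      _ = M + 1 := add_comm _ _
  have hk := (PiLp.norm_apply_le _ k).trans_lt hxy
  rw [Real.norm_eq_abs, abs_lt] at hk
  cases hα : α k <;> simp only [hα, signVec, PiLp.sub_apply, PiLp.smul_apply, smul_eq_mul,
    if_true, Bool.false_eq_true, if_false] at hk ⊢ <;> linarith [hk.1, hk.2]

theorem jointCUD_of_cfs_general
    {mΩ : MeasurableSpace Ω} (μ : Measure Ω) [IsProbabilityMeasure μ]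
    (T : ℝ) (d : ℕ)
    (F : MeasureTheory.Filtration ℝ mΩ)
    (X : ℝ → Ω → EuclideanSpace ℝ (Fin d))
    (hXcont : ∀ ω, Continuous fun t => X t ω)
    (hXadapted : ∀ t : ℝ, Measurable[F t] (X t))
    (hCFS : HasCFS μ T (fun t => F t) X) :
    JointCUD μ T F X := by
  intro h hh τ₁ τ₂ hτ₁ _ hτ₁T hτ₂T _ hgap B hB hμB α _
  set δ := h / 2 with hδ_def
  have hδ : 0 < δ := half_pos hh.1
  have hτ₁B : ∀ᵐ ω ∂μ, ω ∈ B → τ₁ ω + δ < T := by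
    filter_upwards [hgap] with ω hω _
    linarith [(hτ₂T ω).2]
  obtain ⟨t₀, ht₀, M, hμB'⟩ := exists_measure_window_pos X (fun ω => (hτ₁T ω).1) hμB hδ hτ₁B
  have hXprog : IsStronglyProgressive F X :=
    StronglyAdapted.isStronglyProgressive_of_continuous
      (fun t => (hXadapted t).stronglyMeasurable) hXcont
  set w := (M + 1) • signVec α
  have hE := measure_inter_pos_of_ae_condExp_indicator_pos (F.le t₀)
    (measurableSet_window hXprog hτ₁ hB t₀ δ M)
    (measurableSet_sbEvent (fun t => ((hXadapted t).mono (F.le t) le_rfl).stronglyMeasurable)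
      hXcont t₀ T 1 (continuous_ramp t₀ δ w).continuousOn) hμB'
    (hCFS t₀ ht₀ _ (continuous_ramp t₀ δ w).continuousOn (ramp_self t₀ δ w) 1 one_pos)
  refine hE.trans_le (measure_mono_ae ?_)
  filter_upwards [hgap] with ω hgapω ⟨⟨hωB, hτ₁ω, hM⟩, hωE⟩
  have hτ₂ω : t₀ + δ ≤ τ₂ ω := by linarith [hτ₁ω.1]
  have hup : ‖X (τ₂ ω) ω - X t₀ ω - w‖ < 1 := by
    simpa only [ramp_of_le hδ hτ₂ω] using hωE (τ₂ ω) ⟨by linarith, (hτ₂T ω).2⟩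
  refine ⟨mem_iInter₂.2 fun k _ => ?_, hωB⟩
  have hk := lt_apply_of_norm_sub_smul_signVec_lt hM hup k
  split_ifs at hk ⊢ <;> exact hk

/-- conditional full support implies the joint conditional up-and-down
condition. -/
theorem jointCUD_of_cfs
    {mΩ : MeasurableSpace Ω} (μ : Measure Ω) [IsProbabilityMeasure μ]
    (T : ℝ) (hT : 0 < T) (d : ℕ)
    (F : MeasureTheory.Filtration ℝ mΩ)
    -- usual conditions
    (hFright : ∀ t : ℝ, (F t : MeasurableSpace Ω) = ⨅ s ∈ Set.Ioi t, (F s : MeasurableSpace Ω))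
    (hFcomplete : ∀ (t : ℝ) (N : Set Ω), μ N = 0 → MeasurableSet[F t] N)
    (X : ℝ → Ω → EuclideanSpace ℝ (Fin d))
    (hXcont : ∀ ω, Continuous fun t => X t ω)
    (hXadapted : ∀ t : ℝ, Measurable[F t] (X t))
    (hCFS : HasCFS μ T (fun t => F t) X) :
    JointCUD μ T F X :=
  jointCUD_of_cfs_general μ T d F X hXcont hXadapted hCFS
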